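/- Let $T$ be a relative Rota-Baxter operator and suppose $T_t = T + t\mathfrak{T}$ is a relative Rota-Baxter operator for all scalars $t$ (a linear deformation generated by $\mathfrak{T}$). Then: (1) $\mathfrak{T}$ satisfies $\partial^1\mathfrak{T}=0$, i.e., $\{Tu,Tv,\mathfrak{T}w\}+\{Tu,\mathfrak{T}v,Tw\}+\{\mathfrak{T}u,Tv,Tw\} = \mathfrak{T}(l(Tu,Tv)w+m(Tu,Tw)v+r(Tv,Tw)u) + T(l(Tu,\mathfrak{T}v)w+m(\mathfrak{T}u,Tw)v+r(Tv,\mathfrak{T}w)u + l(\mathfrak{T}u,Tv)w+m(Tu,\mathfrak{T}w)v+r(\mathfrak{T}v,Tw)u)$; and (2) $\mathfrak{T}$ is itself a relative Rota-Baxter operator. -/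

import Mathlib

def IsTrilin (K : Type*) [Field K] {L M : Type*} [AddCommGroup L] [Module K L]
    [AddCommGroup M] [Module K M] (t : L → L → L → M) : Prop :=
  (∀ y z, IsLinearMap K fun x => t x y z) ∧ (∀ x z, IsLinearMap K fun y => t x y z) ∧
    (∀ x y, IsLinearMap K fun z => t x y z)

def LTSIdent {L : Type*} [AddCommGroup L] (t : L → L → L → L) : Prop :=
  (∀ a b c d e, t a b (t c d e) =
      t (t a b c) d e - t (t a b d) c e - t (t a b e) c d + t (t a b e) d c) ∧
  (∀ a b c d e, t a (t b c d) e =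
      t (t a b c) d e - t (t a c b) d e - t (t a d b) c e + t (t a d c) b e)

def IsLTS (K : Type*) [Field K] {L : Type*} [AddCommGroup L] [Module K L]
    (t : L → L → L → L) : Prop := IsTrilin K t ∧ LTSIdent t

def sd {L V : Type*} [AddCommGroup L] [AddCommGroup V]
    (t : L → L → L → L) (l m r : L → L → V → V) :
    L × V → L × V → L × V → L × V :=
  fun p q s => (t p.1 q.1 s.1, l p.1 q.1 s.2 + m p.1 s.1 q.2 + r q.1 s.1 p.2)

def IsRep (K : Type*) [Field K] {L V : Type*} [AddCommGroup L] [Module K L]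
    [AddCommGroup V] [Module K V] (t : L → L → L → L) (l m r : L → L → V → V) : Prop :=
  IsLTS K (sd t l m r)

def IsRRB {K : Type*} [Field K] {L V : Type*} [AddCommGroup L] [Module K L]
    [AddCommGroup V] [Module K V] (t : L → L → L → L) (l m r : L → L → V → V)
    (T : V →ₗ[K] L) : Prop :=
  ∀ u v w, t (T u) (T v) (T w) =
    T (l (T u) (T v) w + m (T u) (T w) v + r (T v) (T w) u)

def IsRB {K : Type*} [Field K] {L : Type*} [AddCommGroup L] [Module K L]
    (t : L → L → L → L) (R : L →ₗ[K] L) : Prop :=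
  ∀ x y z, t (R x) (R y) (R z) =
    R (t (R x) (R y) z + t (R x) y (R z) + t x (R y) (R z))

def IsNij {K : Type*} [Field K] {A : Type*} [AddCommGroup A] [Module K A]
    (t : A → A → A → A) (N : A →ₗ[K] A) : Prop :=
  ∀ x y z, t (N x) (N y) (N z) =
    N (t (N x) (N y) z) + N (t x (N y) (N z)) + N (t (N x) y (N z))
      - N (N (t (N x) y z)) - N (N (t x (N y) z)) - N (N (t x y (N z)))
      + N (N (N (t x y z)))

lemma quartic_vanish {K M : Type*} [Field K] [CharZero K] [AddCommGroup M] [Module K M]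
    (A0 A1 A2 A3 A4 : M)
    (h : ∀ c : K, A0 + c • A1 + c ^ 2 • A2 + c ^ 3 • A3 + c ^ 4 • A4 = 0) :
    A1 = 0 ∧ A3 = 0 := by
  have div : ∀ (n : K) (x : M), n ≠ 0 → n • x = 0 → x = 0 := by
    intro n x hn hx
    have := congrArg (fun y => n⁻¹ • y) hx
    simpa [smul_smul, inv_mul_cancel₀ hn] using this
  have hA1 : (24 : K) • A1 = 0 := by
    linear_combination (norm := module) (16:K) • h 1 - (16:K) • h (-1) - (2:K) • h 2 + (2:K) • h (-2)
  have hA3 : (24 : K) • A3 = 0 := by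
    linear_combination (norm := module) (2:K) • h 2 - (2:K) • h (-2) - (4:K) • h 1 + (4:K) • h (-1)
  exact ⟨div 24 A1 (by norm_num) hA1, div 24 A3 (by norm_num) hA3⟩

lemma tri_expand {K : Type*} [Field K] {L M : Type*} [AddCommGroup L] [Module K L]
    [AddCommGroup M] [Module K M] {f : L → L → L → M} (h : IsTrilin K f) (c : K)
    (a b a' b' a'' b'' : L) :
    f (a + c • b) (a' + c • b') (a'' + c • b'') =
      f a a' a'' + c • (f b a' a'' + f a b' a'' + f a a' b'')
        + c ^ 2 • (f a b' b'' + f b a' b'' + f b b' a'') + c ^ 3 • f b b' b'' := by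
  obtain ⟨h1, h2, h3⟩ := h
  have e1 : ∀ Y Z, f (a + c • b) Y Z = f a Y Z + c • f b Y Z := by
    intro Y Z
    have ha := (h1 Y Z).map_add a (c • b)
    have hs := (h1 Y Z).map_smul c b
    rw [ha, hs]
  have e2 : ∀ X Z, f X (a' + c • b') Z = f X a' Z + c • f X b' Z := by
    intro X Z
    have ha := (h2 X Z).map_add a' (c • b')
    have hs := (h2 X Z).map_smul c b'
    rw [ha, hs]
  have e3 : ∀ X Y, f X Y (a'' + c • b'') = f X Y a'' + c • f X Y b'' := by
    intro X Y
    have ha := (h3 X Y).map_add a'' (c • b'')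
    have hs := (h3 X Y).map_smul c b''
    rw [ha, hs]
  rw [e1, e2, e2, e3, e3, e3, e3]
  module

theorem stmt12 {K : Type*} [Field K] [CharZero K] {L V : Type*} [AddCommGroup L]
    [Module K L] [AddCommGroup V] [Module K V]
    (t : L → L → L → L) (l m r : L → L → V → V)
    (hL : IsLTS K t) (hrep : IsRep K t l m r)
    (T 𝔗 : V →ₗ[K] L) (hT : IsRRB t l m r T)
    (hdef : ∀ c : K, IsRRB t l m r (T + c • 𝔗)) :
    (∀ u v w : V,
      t (T u) (T v) (𝔗 w) + t (T u) (𝔗 v) (T w) + t (𝔗 u) (T v) (T w) =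
        𝔗 (l (T u) (T v) w + m (T u) (T w) v + r (T v) (T w) u)
          + T (l (T u) (𝔗 v) w + m (𝔗 u) (T w) v + r (T v) (𝔗 w) u
            + l (𝔗 u) (T v) w + m (T u) (𝔗 w) v + r (𝔗 v) (T w) u)) ∧
      IsRRB t l m r 𝔗 := by
  have htri : IsTrilin K (sd t l m r) := hrep.1
  -- basic "zero" identities coming from linearity of the semidirect bracket
  have hI : ∀ (x y : L) (u v : V), l x y 0 + m x 0 v + r y 0 u = 0 := by
    intro x y u v
    have h0 := (htri.2.2 (x, u) (y, v)).map_zero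
    simpa [sd, Prod.ext_iff] using congrArg Prod.snd h0
  have hII : ∀ (x z : L) (u w' : V), l x 0 w' + m x z 0 + r 0 z u = 0 := by
    intro x z u w'
    have h0 := (htri.2.1 (x, u) (z, w')).map_zero
    simpa [sd, Prod.ext_iff] using congrArg Prod.snd h0
  have hIII : ∀ (y z : L) (v w' : V), l 0 y w' + m 0 z v + r y z 0 = 0 := by
    intro y z v w'
    have h0 := (htri.1 (y, v) (z, w')).map_zero
    simpa [sd, Prod.ext_iff] using congrArg Prod.snd h0
  have hD : ∀ x y z : L, l x y 0 + m x z 0 + r y z 0 = 0 := by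
    intro x y z
    have a1 := hI x y 0 0
    have a2 := hII x z 0 0
    have a3 := hIII y z 0 0
    have a4 := hI x 0 0 0
    have a5 := hI 0 y 0 0
    have a6 := hII 0 z 0 0
    have a7 := hI 0 0 0 0
    linear_combination (norm := module) a1 + a2 + a3 - a4 - a5 - a6 + a7
  -- the key vanishing of the degree 1 and degree 3 coefficients
  have key : ∀ u v w : V,
      (t (𝔗 u) (T v) (T w) + t (T u) (𝔗 v) (T w) + t (T u) (T v) (𝔗 w)
        - T ((l (𝔗 u) (T v) w + m (𝔗 u) (T w) v + r (T v) (T w) 0)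
            + (l (T u) (𝔗 v) w + m (T u) (T w) 0 + r (𝔗 v) (T w) u)
            + (l (T u) (T v) 0 + m (T u) (𝔗 w) v + r (T v) (𝔗 w) u))
        - 𝔗 (l (T u) (T v) w + m (T u) (T w) v + r (T v) (T w) u) = 0)
      ∧ (t (𝔗 u) (𝔗 v) (𝔗 w)
        - T (l (𝔗 u) (𝔗 v) 0 + m (𝔗 u) (𝔗 w) 0 + r (𝔗 v) (𝔗 w) 0)
        - 𝔗 ((l (T u) (𝔗 v) 0 + m (T u) (𝔗 w) 0 + r (𝔗 v) (𝔗 w) u)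
            + (l (𝔗 u) (T v) 0 + m (𝔗 u) (𝔗 w) v + r (T v) (𝔗 w) 0)
            + (l (𝔗 u) (𝔗 v) w + m (𝔗 u) (T w) 0 + r (𝔗 v) (T w) 0)) = 0) := by
    intro u v w
    have hP : ∀ c : K,
        (t (T u) (T v) (T w) - T (l (T u) (T v) w + m (T u) (T w) v + r (T v) (T w) u))
        + c • (t (𝔗 u) (T v) (T w) + t (T u) (𝔗 v) (T w) + t (T u) (T v) (𝔗 w)
            - T ((l (𝔗 u) (T v) w + m (𝔗 u) (T w) v + r (T v) (T w) 0)
                + (l (T u) (𝔗 v) w + m (T u) (T w) 0 + r (𝔗 v) (T w) u)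
                + (l (T u) (T v) 0 + m (T u) (𝔗 w) v + r (T v) (𝔗 w) u))
            - 𝔗 (l (T u) (T v) w + m (T u) (T w) v + r (T v) (T w) u))
        + c ^ 2 • (t (T u) (𝔗 v) (𝔗 w) + t (𝔗 u) (T v) (𝔗 w) + t (𝔗 u) (𝔗 v) (T w)
            - T ((l (T u) (𝔗 v) 0 + m (T u) (𝔗 w) 0 + r (𝔗 v) (𝔗 w) u)
                + (l (𝔗 u) (T v) 0 + m (𝔗 u) (𝔗 w) v + r (T v) (𝔗 w) 0)
                + (l (𝔗 u) (𝔗 v) w + m (𝔗 u) (T w) 0 + r (𝔗 v) (T w) 0))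
            - 𝔗 ((l (𝔗 u) (T v) w + m (𝔗 u) (T w) v + r (T v) (T w) 0)
                + (l (T u) (𝔗 v) w + m (T u) (T w) 0 + r (𝔗 v) (T w) u)
                + (l (T u) (T v) 0 + m (T u) (𝔗 w) v + r (T v) (𝔗 w) u)))
        + c ^ 3 • (t (𝔗 u) (𝔗 v) (𝔗 w)
            - T (l (𝔗 u) (𝔗 v) 0 + m (𝔗 u) (𝔗 w) 0 + r (𝔗 v) (𝔗 w) 0)
            - 𝔗 ((l (T u) (𝔗 v) 0 + m (T u) (𝔗 w) 0 + r (𝔗 v) (𝔗 w) u)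
                + (l (𝔗 u) (T v) 0 + m (𝔗 u) (𝔗 w) v + r (T v) (𝔗 w) 0)
                + (l (𝔗 u) (𝔗 v) w + m (𝔗 u) (T w) 0 + r (𝔗 v) (T w) 0)))
        + c ^ 4 • (- 𝔗 (l (𝔗 u) (𝔗 v) 0 + m (𝔗 u) (𝔗 w) 0 + r (𝔗 v) (𝔗 w) 0)) = 0 := by
      intro c
      have h := hdef c u v w
      simp only [LinearMap.add_apply, LinearMap.smul_apply] at h
      have hS := tri_expand htri c (T u, u) (𝔗 u, (0:V)) (T v, v) (𝔗 v, (0:V))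
        (T w, w) (𝔗 w, (0:V))
      rw [show ((T u, u) + c • (𝔗 u, (0:V)) : L × V) = (T u + c • 𝔗 u, u) from by simp,
          show ((T v, v) + c • (𝔗 v, (0:V)) : L × V) = (T v + c • 𝔗 v, v) from by simp,
          show ((T w, w) + c • (𝔗 w, (0:V)) : L × V) = (T w + c • 𝔗 w, w) from by simp] at hS
      have hfst := congrArg Prod.fst hS
      have hsnd := congrArg Prod.snd hS
      simp only [sd, Prod.fst_add, Prod.snd_add, Prod.smul_fst, Prod.smul_snd] at hfst hsnd
      rw [hfst, hsnd] at h
      simp only [map_add, map_smul] at h ⊢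
      linear_combination (norm := module) h
    exact quartic_vanish _ _ _ _ _ hP
  constructor
  · intro u v w
    have h1 := (key u v w).1
    rw [sub_sub, sub_eq_zero] at h1
    have e : (l (𝔗 u) (T v) w + m (𝔗 u) (T w) v + r (T v) (T w) 0)
          + (l (T u) (𝔗 v) w + m (T u) (T w) 0 + r (𝔗 v) (T w) u)
          + (l (T u) (T v) 0 + m (T u) (𝔗 w) v + r (T v) (𝔗 w) u)
        = (l (T u) (𝔗 v) w + m (𝔗 u) (T w) v + r (T v) (𝔗 w) u
            + l (𝔗 u) (T v) w + m (T u) (𝔗 w) v + r (𝔗 v) (T w) u)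
          + (l (T u) (T v) 0 + m (T u) (T w) 0 + r (T v) (T w) 0) := by abel
    rw [e, hD (T u) (T v) (T w), add_zero] at h1
    linear_combination (norm := module) h1
  · intro u v w
    have h2 := (key u v w).2
    rw [hD (𝔗 u) (𝔗 v) (𝔗 w), map_zero, sub_zero] at h2
    have e : (l (T u) (𝔗 v) 0 + m (T u) (𝔗 w) 0 + r (𝔗 v) (𝔗 w) u)
          + (l (𝔗 u) (T v) 0 + m (𝔗 u) (𝔗 w) v + r (T v) (𝔗 w) 0)
          + (l (𝔗 u) (𝔗 v) w + m (𝔗 u) (T w) 0 + r (𝔗 v) (T w) 0)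
        = (l (𝔗 u) (𝔗 v) w + m (𝔗 u) (𝔗 w) v + r (𝔗 v) (𝔗 w) u)
          + ((l (T u) (𝔗 v) 0 + m (T u) (𝔗 w) 0 + r (𝔗 v) (𝔗 w) 0)
            + (l (𝔗 u) (T v) 0 + m (𝔗 u) (T w) 0 + r (T v) (T w) 0)
            + (l 0 (T v) 0 + m 0 (𝔗 w) 0 + r (T v) (𝔗 w) 0)
            + (l 0 (𝔗 v) 0 + m 0 (T w) 0 + r (𝔗 v) (T w) 0)
            - (l 0 (T v) 0 + m 0 (T w) 0 + r (T v) (T w) 0)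
            - (l 0 (𝔗 v) 0 + m 0 (𝔗 w) 0 + r (𝔗 v) (𝔗 w) 0)) := by abel
    rw [e, hD (T u) (𝔗 v) (𝔗 w), hD (𝔗 u) (T v) (T w), hD 0 (T v) (𝔗 w),
        hD 0 (𝔗 v) (T w), hD 0 (T v) (T w), hD 0 (𝔗 v) (𝔗 w)] at h2
    simp only [add_zero, sub_zero, zero_add, zero_sub, neg_zero] at h2
    linear_combination (norm := module) h2
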